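/- Let H be a well-placed topological subgroup of a topological group G. If a continuous action of G on a compact Hausdorff space X is amenable, then the restricted action H ↷ X is amenable. -/

import Mathlib

open Filter Topology MeasureTheory UniformConvergence

/-- `Δ(G)`: finitely supported probability densities on `G`. -/
def IsDelta {G : Type*} (μ : G → ℝ) : Prop :=
  (Function.support μ).Finite ∧ (∀ x, 0 ≤ μ x) ∧ ∑ᶠ x, μ x = 1

/-- The pairing `⟨μ, f⟩ = ∑ₓ μ(x) · f(x)`. -/
noncomputable def dpair {G : Type*} (μ f : G → ℝ) : ℝ := ∑ᶠ x, μ x * f x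

/-- Left-translation action on densities: `(g · μ)(x) = μ(g⁻¹x)`. -/
def actD {G : Type*} [Group G] (g : G) (μ : G → ℝ) : G → ℝ := fun x => μ (g⁻¹ * x)

/-- Action on functionals: `(g · ξ)(f) = ξ(f ∘ λ_g)`. -/
def actF {G : Type*} [Group G] (g : G) (ξ : (G → ℝ) → ℝ) : (G → ℝ) → ℝ :=
  fun f => ξ fun x => f (g * x)

/-- The functional `f ↦ ⟨μ, f⟩` associated with a density `μ`. -/
noncomputable def toFunc {G : Type*} (μ : G → ℝ) : (G → ℝ) → ℝ := fun f => dpair μ f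

/-- Bounded right-uniformly continuous functions. -/
def IsRUCB {G : Type*} [Group G] [TopologicalSpace G] (f : G → ℝ) : Prop :=
  (∃ C : ℝ, ∀ x, |f x| ≤ C) ∧
  ∀ ε > (0 : ℝ), ∃ U ∈ nhds (1 : G), ∀ u ∈ U, ∀ x : G, |f x - f (u * x)| ≤ ε

/-- RUEB sets: sup-norm bounded, right-uniformly equicontinuous. -/
def IsRUEB {G : Type*} [Group G] [TopologicalSpace G] (B : Set (G → ℝ)) : Prop :=
  (∃ C : ℝ, ∀ f ∈ B, ∀ x : G, |f x| ≤ C) ∧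
  ∀ ε > (0 : ℝ), ∃ U ∈ nhds (1 : G), ∀ u ∈ U, ∀ f ∈ B, ∀ x : G, |f x - f (u * x)| ≤ ε

/-- Bounded left-uniformly continuous functions. -/
def IsLUCB {G : Type*} [Group G] [TopologicalSpace G] (f : G → ℝ) : Prop :=
  (∃ C : ℝ, ∀ x, |f x| ≤ C) ∧
  ∀ ε > (0 : ℝ), ∃ U ∈ nhds (1 : G), ∀ u ∈ U, ∀ x : G, |f x - f (x * u)| ≤ ε

/-- LUEB sets: sup-norm bounded, left-uniformly equicontinuous. -/
def IsLUEB {G : Type*} [Group G] [TopologicalSpace G] (B : Set (G → ℝ)) : Prop :=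
  (∃ C : ℝ, ∀ f ∈ B, ∀ x : G, |f x| ≤ C) ∧
  ∀ ε > (0 : ℝ), ∃ U ∈ nhds (1 : G), ∀ u ∈ U, ∀ f ∈ B, ∀ x : G, |f x - f (x * u)| ≤ ε

/-- The UEB uniformity (uniform convergence on RUEB sets) on the space of
functionals on functions on `G`. -/
noncomputable def uebUniformityR (G : Type*) [Group G] [TopologicalSpace G] :
    UniformSpace ((G → ℝ) → ℝ) :=
  ⨅ (B : Set (G → ℝ)) (_ : IsRUEB B),
    UniformSpace.comap (fun ξ => UniformFun.ofFun fun f : B => ξ (f : G → ℝ))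
      (UniformFun.uniformSpace (↥B) ℝ)

/-- The UEB topology associated with the right uniformity. -/
noncomputable def uebTopR (G : Type*) [Group G] [TopologicalSpace G] :
    TopologicalSpace ((G → ℝ) → ℝ) := (uebUniformityR G).toTopologicalSpace

/-- `Mean_u(G_r)`: the UEB-closure of `Δ(G)` inside the functionals. -/
noncomputable def MeanUR (G : Type*) [Group G] [TopologicalSpace G] :
    Set ((G → ℝ) → ℝ) :=
  @closure _ (uebTopR G) (toFunc '' {μ : G → ℝ | IsDelta μ})

/-- The UEB uniformity (uniform convergence on LUEB sets). -/
noncomputable def uebUniformityL (G : Type*) [Group G] [TopologicalSpace G] :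
    UniformSpace ((G → ℝ) → ℝ) :=
  ⨅ (B : Set (G → ℝ)) (_ : IsLUEB B),
    UniformSpace.comap (fun ξ => UniformFun.ofFun fun f : B => ξ (f : G → ℝ))
      (UniformFun.uniformSpace (↥B) ℝ)

/-- The UEB topology associated with the left uniformity. -/
noncomputable def uebTopL (G : Type*) [Group G] [TopologicalSpace G] :
    TopologicalSpace ((G → ℝ) → ℝ) := (uebUniformityL G).toTopologicalSpace

/-- `Mean_u(G_ℓ)`: the UEB-closure of `Δ(G)`. -/
noncomputable def MeanUL (G : Type*) [Group G] [TopologicalSpace G] :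
    Set ((G → ℝ) → ℝ) :=
  @closure _ (uebTopL G) (toFunc '' {μ : G → ℝ | IsDelta μ})

/-- Amenability of an action of a topological group on a topological space. -/
def AmenableAction {G : Type*} [Group G] [TopologicalSpace G]
    {X : Type*} [TopologicalSpace X] (act : G → X → X) : Prop :=
  ∃ (ι : Type) (pι : Preorder ι) (_ : Nonempty ι)
    (_ : IsDirected ι fun a b => pι.le a b)
    (μ : ι → X → (G → ℝ) → ℝ),
    (∀ i x, μ i x ∈ MeanUR G) ∧
    (∀ i, @Continuous X ((G → ℝ) → ℝ) inferInstance (uebTopR G) (μ i)) ∧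
    ∀ (g : G) (B : Set (G → ℝ)), IsRUEB B → ∀ ε > (0 : ℝ),
      ∃ i₀, ∀ i, pι.le i₀ i → ∀ x, ∀ f ∈ B,
        |actF g (μ i x) f - μ i (act g x) f| ≤ ε

/-- Skew-amenability of an action. -/
def SkewAmenableAction {G : Type*} [Group G] [TopologicalSpace G]
    {X : Type*} [TopologicalSpace X] (act : G → X → X) : Prop :=
  ∃ (ι : Type) (pι : Preorder ι) (_ : Nonempty ι)
    (_ : IsDirected ι fun a b => pι.le a b)
    (μ : ι → X → (G → ℝ) → ℝ),
    (∀ i x, μ i x ∈ MeanUL G) ∧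
    (∀ i, @Continuous X ((G → ℝ) → ℝ) inferInstance (uebTopL G) (μ i)) ∧
    ∀ (g : G) (B : Set (G → ℝ)), IsLUEB B → ∀ ε > (0 : ℝ),
      ∃ i₀, ∀ i, pι.le i₀ i → ∀ x, ∀ f ∈ B,
        |actF g (μ i x) f - μ i (act g x) f| ≤ ε

/-- AD-amenability (Anantharaman-Delaroche) of an action of a locally compact
group, with respect to a left Haar measure `ν`. -/
def ADAmenableAction {G : Type*} [Group G] [TopologicalSpace G] [MeasurableSpace G]
    (ν : Measure G) {X : Type*} [TopologicalSpace X] (act : G → X → X) : Prop :=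
  ∃ (ι : Type) (pι : Preorder ι) (_ : Nonempty ι)
    (_ : IsDirected ι fun a b => pι.le a b)
    (μ : ι → X → G → ℝ),
    (∀ i x, Integrable (μ i x) ν ∧ (∀ᵐ t ∂ν, 0 ≤ μ i x t) ∧ ∫ t, μ i x t ∂ν = 1) ∧
    (∀ i (h : G → ℝ), Continuous h → Tendsto h (cocompact G) (nhds 0) →
      Continuous fun x => ∫ t, h t * μ i x t ∂ν) ∧
    ∀ K : Set G, IsCompact K → ∀ ε > (0 : ℝ),
      ∃ i₀, ∀ i, pι.le i₀ i → ∀ g ∈ K, ∀ x,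
        ∫ t, |μ i x (g⁻¹ * t) - μ i (act g x) t| ∂ν ≤ ε

/-- Amenability of a topological group: a left-invariant mean on `RUCB(G)`. -/
def AmenableGroup (G : Type*) [Group G] [TopologicalSpace G] : Prop :=
  ∃ m : (G → ℝ) → ℝ,
    (∀ f h : G → ℝ, IsRUCB f → IsRUCB h → m (f + h) = m f + m h) ∧
    (∀ (c : ℝ) (f : G → ℝ), IsRUCB f → m (c • f) = c * m f) ∧
    (∀ f : G → ℝ, IsRUCB f → (∀ x, 0 ≤ f x) → 0 ≤ m f) ∧
    m (fun _ => 1) = 1 ∧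
    ∀ (g : G) (f : G → ℝ), IsRUCB f → m (fun x => f (g * x)) = m f

/-- Well-placed subgroups: there is an `H`-left-equivariant, right-uniformly
continuous map `G → Mean_u(H_r)` (uniform continuity spelled out via the basic
entourages of the right uniformity of `G` and the UEB pseudometrics). -/
def WellPlaced {G : Type*} [Group G] [TopologicalSpace G] (H : Subgroup G) : Prop :=
  ∃ φ : G → ((↥H → ℝ) → ℝ),
    (∀ g, φ g ∈ MeanUR ↥H) ∧
    (∀ (h : ↥H) (g : G), φ ((h : G) * g) = actF h (φ g)) ∧
    ∀ B : Set (↥H → ℝ), IsRUEB B → ∀ ε > (0 : ℝ), ∃ U ∈ nhds (1 : G),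
      ∀ x y : G, x * y⁻¹ ∈ U → ∀ f ∈ B, |φ x f - φ y f| ≤ ε

/-! The well-placing map `φ : G → Mean_u(H_r)` transposes to `swap φ`, which sends a function
`f` on `H` to `g ↦ φ g f` on `G`. Means are bounded by the sup norm and `φ` is right-uniformly
continuous, so `swap φ` maps RUEB sets to RUEB sets; hence `ξ ↦ ξ ∘ swap φ` is UEB-uniformly
continuous. It maps `Mean_u(G_r)` into `Mean_u(H_r)`: if `m ∈ Δ(G)` approximates `ξ` and each
`ν g ∈ Δ(H)` approximates `φ g`, then the mixture `∑ m(g) ν g` approximates `ξ ∘ swap φ`.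
The `H`-equivariance of `φ` makes it intertwine the `H`-actions, so it carries an approximately
`G`-equivariant net of means for `G ↷ X` to one for `H ↷ X`. -/

open Function

theorem hasBasis_uniformity_comap_uniformFun {α : Type*} (B : Set α) :
    (@uniformity _ (UniformSpace.comap (fun ξ : α → ℝ => UniformFun.ofFun fun f : B => ξ f)
      (UniformFun.uniformSpace B ℝ))).HasBasis (fun ε : ℝ => 0 < ε)
      fun ε => {p | ∀ f ∈ B, |p.1 f - p.2 f| ≤ ε} := by
  rw [uniformity_comap]
  refine ((UniformFun.hasBasis_uniformity_of_basis B ℝ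
    Metric.uniformity_basis_dist_le).comap _).congr (fun _ => Iff.rfl) fun ε _ => ?_
  ext p
  simp [UniformFun.gen, Real.dist_eq]

section UEB

variable {G : Type*} [Group G] [TopologicalSpace G]

theorem isRUEB_empty : IsRUEB (∅ : Set (G → ℝ)) :=
  ⟨⟨0, fun _ hf => hf.elim⟩, fun _ _ => ⟨Set.univ, univ_mem, fun _ _ _ hf => hf.elim⟩⟩

theorem IsRUEB.union {B B' : Set (G → ℝ)} (hB : IsRUEB B) (hB' : IsRUEB B') :
    IsRUEB (B ∪ B') := by
  obtain ⟨⟨C, hC⟩, hU⟩ := hB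
  obtain ⟨⟨C', hC'⟩, hU'⟩ := hB'
  refine ⟨⟨max C C', ?_⟩, fun ε hε => ?_⟩
  · rintro f (hf | hf) x
    exacts [(hC f hf x).trans (le_max_left _ _), (hC' f hf x).trans (le_max_right _ _)]
  · obtain ⟨U, hU, hUε⟩ := hU ε hε
    obtain ⟨U', hU', hU'ε⟩ := hU' ε hε
    refine ⟨U ∩ U', inter_mem hU hU', ?_⟩
    rintro u ⟨hu, hu'⟩ f (hf | hf) x
    exacts [hUε u hu f hf x, hU'ε u hu' f hf x]

theorem hasBasis_uniformity_uebUniformityR :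
    (@uniformity _ (uebUniformityR G)).HasBasis
      (fun p : {B : Set (G → ℝ) // IsRUEB B} × ℝ => 0 < p.2)
      fun p => {q | ∀ f ∈ p.1.1, |q.1 f - q.2 f| ≤ p.2} := by
  have : Nonempty {B : Set (G → ℝ) // IsRUEB B} := ⟨⟨∅, isRUEB_empty⟩⟩
  rw [uebUniformityR, iInf_subtype', iInf_uniformity]
  refine hasBasis_iInf_of_directed _ _ (fun B => hasBasis_uniformity_comap_uniformFun B.1)
    fun B₁ B₂ : {B : Set (G → ℝ) // IsRUEB B} => ⟨⟨B₁.1 ∪ B₂.1, B₁.2.union B₂.2⟩, ?_, ?_⟩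
  all_goals
    refine ((hasBasis_uniformity_comap_uniformFun _).le_basis_iff
      (hasBasis_uniformity_comap_uniformFun _)).2 fun ε hε => ⟨ε, hε, fun p hp f hf => ?_⟩
  exacts [hp f (Or.inl hf), hp f (Or.inr hf)]

theorem mem_MeanUR_iff {ξ : (G → ℝ) → ℝ} :
    ξ ∈ MeanUR G ↔ ∀ B, IsRUEB B → ∀ ε > (0 : ℝ),
      ∃ μ, IsDelta μ ∧ ∀ f ∈ B, |ξ f - toFunc μ f| ≤ ε := by
  rw [MeanUR, uebTopR, @mem_closure_iff_nhds_basis _ (uebUniformityR G).toTopologicalSpace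
    _ _ _ _ _ (@nhds_basis_uniformity _ _ (uebUniformityR G) _ _
      hasBasis_uniformity_uebUniformityR ξ)]
  simp only [Set.exists_mem_image, Set.mem_ofPred_eq, Prod.forall, Subtype.forall,
    abs_sub_comm (toFunc _ _), gt_iff_lt]

end UEB

section Delta

variable {A : Type*} {μ : A → ℝ}

theorem dpair_eq_sum {S : Finset A} (h : support μ ⊆ S) (f : A → ℝ) :
    dpair μ f = ∑ x ∈ S, μ x * f x :=
  finsum_eq_sum_of_support_subset _ ((support_mul_subset_left μ f).trans h)

theorem dpair_sub (hμ : HasFiniteSupport μ) (f f' : A → ℝ) :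
    dpair μ f - dpair μ f' = dpair μ (f - f') := by
  simp only [dpair, Pi.sub_apply, mul_sub]
  exact (finsum_sub_distrib (hμ.fun_mul_left f) (hμ.fun_mul_left f')).symm

theorem dpair_sum_smul {ι : Type*} (S : Finset ι) (c : ι → ℝ) {ν : ι → A → ℝ}
    (hν : ∀ i, HasFiniteSupport (ν i)) (f : A → ℝ) :
    dpair (∑ i ∈ S, c i • ν i) f = ∑ i ∈ S, c i * dpair (ν i) f := by
  simp only [dpair, Finset.sum_apply, Pi.smul_apply, smul_eq_mul, Finset.sum_mul, mul_finsum,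
    mul_assoc]
  exact finsum_sum_comm S _ fun i _ => ((hν i).fun_mul_left f).fun_mul_right _

namespace IsDelta

theorem sum_eq_one (hμ : IsDelta μ) {S : Finset A} (h : support μ ⊆ S) : ∑ x ∈ S, μ x = 1 :=
  (finsum_eq_sum_of_support_subset μ h).symm.trans hμ.2.2

theorem dpair_one (hμ : IsDelta μ) : dpair μ (fun _ => 1) = 1 := by
  simpa [dpair] using hμ.2.2

theorem exists_support_subset_finset (hμ : IsDelta μ) : ∃ S : Finset A, support μ ⊆ S :=
  ⟨hμ.1.toFinset, fun _ hx => hμ.1.mem_toFinset.2 hx⟩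

theorem abs_dpair_le (hμ : IsDelta μ) {f : A → ℝ} {C : ℝ} (hf : ∀ x, |f x| ≤ C) :
    |dpair μ f| ≤ C := by
  obtain ⟨S, hS⟩ := hμ.exists_support_subset_finset
  rw [dpair_eq_sum hS]
  calc |∑ x ∈ S, μ x * f x|
      ≤ ∑ x ∈ S, μ x * C := by
        refine (Finset.abs_sum_le_sum_abs _ _).trans (Finset.sum_le_sum fun x _ => ?_)
        rw [abs_mul, abs_of_nonneg (hμ.2.1 x)]
        exact mul_le_mul_of_nonneg_left (hf x) (hμ.2.1 x)
    _ = C := by rw [← Finset.sum_mul, hμ.sum_eq_one hS, one_mul]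

theorem exists_dpair_eq_dpair_dpair {B : Type*} (hμ : IsDelta μ) {ν : A → B → ℝ}
    (hν : ∀ a, IsDelta (ν a)) :
    ∃ ρ, IsDelta ρ ∧ ∀ f, dpair ρ f = dpair μ fun a => dpair (ν a) f := by
  obtain ⟨S, hS⟩ := hμ.exists_support_subset_finset
  have hρ := dpair_sum_smul S μ fun a => (hν a).1
  refine ⟨∑ a ∈ S, μ a • ν a, ⟨?_, fun t => ?_, ?_⟩, fun f => ?_⟩
  · have := HasFiniteSupport.sum
      (fun a => (hν a).1.subset (support_const_smul_subset (μ a) (ν a))) S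
    rwa [Finset.sum_fn]
  · simp only [Finset.sum_apply, Pi.smul_apply, smul_eq_mul]
    exact Finset.sum_nonneg fun a _ => mul_nonneg (hμ.2.1 a) ((hν a).2.1 t)
  · calc ∑ᶠ t, (∑ a ∈ S, μ a • ν a) t = dpair (∑ a ∈ S, μ a • ν a) fun _ => 1 := by
          simp only [dpair, mul_one]
      _ = 1 := by simp only [hρ, (hν _).dpair_one, mul_one, hμ.sum_eq_one hS]
  · rw [hρ, dpair_eq_sum hS]

end IsDelta

end Delta

theorem actF_comp_swap {G : Type*} [Group G] {H : Subgroup G} {φ : G → (H → ℝ) → ℝ}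
    (hφ : ∀ (h : H) (g : G), φ (h * g) = actF h (φ g)) (h : H) (ξ : (G → ℝ) → ℝ) :
    actF h (ξ ∘ swap φ) = actF (h : G) ξ ∘ swap φ := by
  ext f
  simp only [actF, comp_apply, swap, hφ]

section Means

open scoped Uniformity

variable {G K : Type*} [Group G] [TopologicalSpace G] [Group K] [TopologicalSpace K]

theorem abs_apply_le_of_mem_MeanUR {ξ : (G → ℝ) → ℝ} (hξ : ξ ∈ MeanUR G)
    {B : Set (G → ℝ)} (hB : IsRUEB B) {C : ℝ} (hC : ∀ f ∈ B, ∀ x, |f x| ≤ C) {f : G → ℝ}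
    (hf : f ∈ B) : |ξ f| ≤ C := by
  refine le_of_forall_pos_le_add fun ε hε => ?_
  obtain ⟨μ, hμ, hξμ⟩ := mem_MeanUR_iff.1 hξ B hB ε hε
  calc |ξ f| ≤ |toFunc μ f| + |ξ f - toFunc μ f| :=
      sub_le_iff_le_add'.1 (abs_sub_abs_le_abs_sub _ _)
    _ ≤ C + ε := add_le_add (hμ.abs_dpair_le (hC f hf)) (hξμ f hf)

theorem uniformContinuous_comp_of_isRUEB_image {L : (K → ℝ) → (G → ℝ)}
    (hL : ∀ B, IsRUEB B → IsRUEB (L '' B)) :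
    UniformContinuous[uebUniformityR G, uebUniformityR K] (· ∘ L) := by
  refine (@Filter.HasBasis.uniformContinuous_iff _ _ _ (uebUniformityR G) (uebUniformityR K)
    _ _ _ hasBasis_uniformity_uebUniformityR _ _ hasBasis_uniformity_uebUniformityR _).2
    fun ⟨⟨B, hB⟩, ε⟩ hε => ⟨(⟨L '' B, hL B hB⟩, ε), hε, fun ξ η hξη f hf => ?_⟩
  exact hξη (L f) ⟨f, hf, rfl⟩

theorem Continuous.precomp_of_isRUEB_image {X : Type*} [TopologicalSpace X]
    {μ : X → (G → ℝ) → ℝ} (hμ : Continuous[_, uebTopR G] μ) {L : (K → ℝ) → (G → ℝ)}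
    (hL : ∀ B, IsRUEB B → IsRUEB (L '' B)) :
    Continuous[_, uebTopR K] fun x => μ x ∘ L :=
  @Continuous.comp _ _ _ _ (uebTopR G) (uebTopR K) _ _
    (@UniformContinuous.continuous _ _ (uebUniformityR G) (uebUniformityR K) _
      (uniformContinuous_comp_of_isRUEB_image hL)) hμ

theorem isRUEB_image_swap {φ : G → (K → ℝ) → ℝ} (hφ : ∀ g, φ g ∈ MeanUR K)
    {B : Set (K → ℝ)} (hB : IsRUEB B)
    (huc : ∀ ε > (0 : ℝ), ∃ U ∈ 𝓝 (1 : G), ∀ x y : G, x * y⁻¹ ∈ U → ∀ f ∈ B,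
      |φ x f - φ y f| ≤ ε) :
    IsRUEB (swap φ '' B) := by
  obtain ⟨C, hC⟩ := hB.1
  refine ⟨⟨C, ?_⟩, fun ε hε => ?_⟩
  · rintro _ ⟨f, hf, rfl⟩ g
    exact abs_apply_le_of_mem_MeanUR (hφ g) hB hC hf
  · obtain ⟨U, hU, hφU⟩ := huc ε hε
    refine ⟨U, hU, ?_⟩
    rintro u hu _ ⟨f, hf, rfl⟩ x
    rw [abs_sub_comm]
    exact hφU (u * x) x (by rwa [mul_inv_cancel_right]) f hf

theorem comp_swap_mem_MeanUR {ξ : (G → ℝ) → ℝ} (hξ : ξ ∈ MeanUR G) {φ : G → (K → ℝ) → ℝ}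
    (hφ : ∀ g, φ g ∈ MeanUR K) (hL : ∀ B, IsRUEB B → IsRUEB (swap φ '' B)) :
    ξ ∘ swap φ ∈ MeanUR K := by
  refine mem_MeanUR_iff.2 fun B hB ε hε => ?_
  obtain ⟨m, hm, hξm⟩ := mem_MeanUR_iff.1 hξ _ (hL B hB) (ε / 2) (half_pos hε)
  choose ν hν hφν using fun g => mem_MeanUR_iff.1 (hφ g) B hB (ε / 2) (half_pos hε)
  obtain ⟨ρ, hρ, hρm⟩ := hm.exists_dpair_eq_dpair_dpair hν
  refine ⟨ρ, hρ, fun f hf => ?_⟩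
  have hmρ : |toFunc m (swap φ f) - toFunc ρ f| ≤ ε / 2 := by
    rw [toFunc, toFunc, hρm, dpair_sub hm.1]
    exact hm.abs_dpair_le fun g => hφν g f hf
  calc |(ξ ∘ swap φ) f - toFunc ρ f|
      ≤ |ξ (swap φ f) - toFunc m (swap φ f)| + |toFunc m (swap φ f) - toFunc ρ f| :=
        abs_sub_le _ _ _
    _ ≤ ε / 2 + ε / 2 := add_le_add (hξm _ ⟨f, hf, rfl⟩) hmρ
    _ = ε := add_halves ε

end Means

theorem well_placed_restriction_general {G : Type*} [Group G] [TopologicalSpace G]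
    {X : Type*} [TopologicalSpace X]
    [MulAction G X]
    (H : Subgroup G) (hwp : WellPlaced H)
    (hGX : AmenableAction fun (g : G) (x : X) => g • x) :
    AmenableAction fun (h : ↥H) (x : X) => (h : G) • x := by
  obtain ⟨φ, hφ, hφH, hφuc⟩ := hwp
  obtain ⟨ι, _, _, _, μ, hμ, hμc, hμeq⟩ := hGX
  have hL (B : Set (H → ℝ)) (hB : IsRUEB B) : IsRUEB (swap φ '' B) :=
    isRUEB_image_swap hφ hB (hφuc B hB)
  refine ⟨ι, _, ‹_›, ‹_›, fun i x => μ i x ∘ swap φ,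
    fun i x => comp_swap_mem_MeanUR (hμ i x) hφ hL,
    fun i => (hμc i).precomp_of_isRUEB_image hL, fun h B hB ε hε => ?_⟩
  obtain ⟨i₀, hi₀⟩ := hμeq h (swap φ '' B) (hL B hB) ε hε
  refine ⟨i₀, fun i hi x f hf => ?_⟩
  rw [actF_comp_swap hφH]
  exact hi₀ i hi x _ ⟨f, hf, rfl⟩

/-- Theorem 5.6: amenability of a continuous action passes to well-placed subgroups. -/
theorem well_placed_restriction {G : Type*} [Group G] [TopologicalSpace G]
    [IsTopologicalGroup G]
    {X : Type*} [TopologicalSpace X] [CompactSpace X] [T2Space X]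
    [MulAction G X] [ContinuousSMul G X]
    (H : Subgroup G) (hwp : WellPlaced H)
    (hGX : AmenableAction fun (g : G) (x : X) => g • x) :
    AmenableAction fun (h : ↥H) (x : X) => (h : G) • x :=
  well_placed_restriction_general H hwp hGX
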